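/- Let $A$ be the point–$k$-space incidence matrix of $\mathrm{PG}(n,q)$, $\pi$ a fixed $k$-subspace with characteristic vector $\chi_\pi$ (of the singleton set $\{\pi\}$), $\mathcal{Z}$ the set of all $k$-subspaces disjoint from $\pi$ with characteristic vector $\chi_{\mathcal{Z}}$, and $j$ the all-one vector. Then $\chi_{\mathcal{Z}} - q^{k^2+k}\binom{n-k-1}{k}_q \left( \binom{n}{k}_q^{-1} j - \chi_\pi \right) \in \ker A$. -/

import Mathlib

open Finset
open scoped Classical

/-- The Gaussian binomial coefficient `[a choose b]_q`, defined via the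
`q`-Pascal recurrence `[a+1, b+1]_q = [a, b]_q + q^(b+1) * [a, b+1]_q`. -/
def gbinom (q : ℕ) : ℕ → ℕ → ℕ
  | _, 0 => 1
  | 0, _+1 => 0
  | a+1, b+1 => gbinom q a b + q^(b+1) * gbinom q a (b+1)

/-!
Row `p` of `A` applied to the vector is
`#{W ∋ p, W ∩ π = 0} - c (#{W ∋ p} / [n, k]_q - [p ⊆ π])` with `c = q^(k²+k) [n-k-1, k]_q`
(dimensions below are vector-space dimensions). Passing to `V ⧸ p`, the `(k+1)`-spaces through
the point `p` that meet a subspace `σ ∌ p` trivially are the `k`-spaces of `V ⧸ p` meeting the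
image of `σ` trivially. The `k`-spaces `W` of a space `V` with `W ∩ σ = 0` are counted through
the `k`-tuples that are independent modulo `σ`: there are
`q^(k dim σ) ∏_{i<k} (q^(dim V/σ) - q^i)` of them, and each such `W` is spanned by exactly
`∏_{i<k} (q^k - q^i)` of them. So `#{W ∋ p} = [n, k]_q`, and `#{W ∋ p, W ∩ π = 0}` is `c` when
`p ⊄ π` and `0` when `p ⊆ π`, which makes the row vanish.
-/

open Submodule Module

section GaussianBinomial

theorem gbinom_zero_right (q a : ℕ) : gbinom q a 0 = 1 := by cases a <;> rfl

theorem gbinom_eq_zero_of_lt (q : ℕ) : ∀ {a b : ℕ}, a < b → gbinom q a b = 0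
  | 0, _ + 1, _ => rfl
  | a + 1, b + 1, h => by
    rw [gbinom, gbinom_eq_zero_of_lt q (by omega : a < b),
      gbinom_eq_zero_of_lt q (by omega : a < b + 1), mul_zero, add_zero]

theorem gbinom_pos {q : ℕ} (hq : 0 < q) : ∀ {a b : ℕ}, b ≤ a → 0 < gbinom q a b
  | _, 0, _ => by rw [gbinom_zero_right]; exact one_pos
  | a + 1, b + 1, h => by
    rw [gbinom]
    exact Nat.add_pos_left (gbinom_pos hq (by omega : b ≤ a)) _

theorem prod_range_succ_pow_sub_pow {R : Type*} [CommRing R] (x : R) (c b : ℕ) :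
    ∏ i ∈ range (b + 1), (x ^ (c + 1) - x ^ i) =
      x ^ b * (∏ i ∈ range b, (x ^ c - x ^ i)) * (x ^ (c + 1) - 1) := by
  rw [prod_range_succ', pow_zero]
  congr 1
  simp only [pow_succ', ← mul_sub, prod_mul_distrib, prod_const, card_range]

theorem gbinom_cast_mul_prod_pow_sub_pow (q : ℕ) : ∀ a b : ℕ,
    (gbinom q a b : ℤ) * ∏ i ∈ range b, ((q : ℤ) ^ b - (q : ℤ) ^ i) =
      ∏ i ∈ range b, ((q : ℤ) ^ a - (q : ℤ) ^ i)
  | a, 0 => by simp [gbinom_zero_right]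
  | 0, b + 1 => by
    rw [gbinom_eq_zero_of_lt q (Nat.succ_pos b), Nat.cast_zero, zero_mul, eq_comm]
    exact prod_eq_zero (mem_range.mpr (Nat.succ_pos b)) (sub_self _)
  | a + 1, b + 1 => by
    have IH₁ := gbinom_cast_mul_prod_pow_sub_pow q a b
    have IH₂ := gbinom_cast_mul_prod_pow_sub_pow q a (b + 1)
    rw [prod_range_succ_pow_sub_pow, prod_range_succ] at IH₂
    rw [prod_range_succ_pow_sub_pow, prod_range_succ_pow_sub_pow, gbinom]
    push_cast
    linear_combination ((q : ℤ) ^ b * ((q : ℤ) ^ (b + 1) - 1)) * IH₁ + (q : ℤ) ^ (b + 1) * IH₂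

theorem gbinom_mul_prod_pow_sub_pow {q : ℕ} (hq : 0 < q) (a b : ℕ) :
    gbinom q a b * ∏ i ∈ range b, (q ^ b - q ^ i) = ∏ i ∈ range b, (q ^ a - q ^ i) := by
  rcases lt_or_ge a b with h | h
  · rw [gbinom_eq_zero_of_lt q h, zero_mul, eq_comm]
    exact prod_eq_zero (mem_range.mpr h) (Nat.sub_self _)
  · have cast_prod : ∀ c ≥ b,
        ((∏ i ∈ range b, (q ^ c - q ^ i) : ℕ) : ℤ) = ∏ i ∈ range b, ((q : ℤ) ^ c - (q : ℤ) ^ i) :=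
      fun c hc => by
        rw [Nat.cast_prod]
        refine prod_congr rfl fun i hi => ?_
        rw [Nat.cast_sub (Nat.pow_le_pow_right hq ((mem_range.1 hi).le.trans hc)), Nat.cast_pow,
          Nat.cast_pow]
    exact_mod_cast (cast_prod b le_rfl ▸ cast_prod a h ▸ gbinom_cast_mul_prod_pow_sub_pow q a b)

end GaussianBinomial

section Ring

variable {R M : Type*} [Ring R] [AddCommGroup M] [Module R M]

theorem linearIndependent_mkQ_comp_iff {ι : Type*} (σ : Submodule R M) (s : ι → M) :
    LinearIndependent R (σ.mkQ ∘ s) ↔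
      LinearIndependent R s ∧ Disjoint (span R (Set.range s)) σ :=
  ⟨fun h => ⟨h.of_comp _, by simpa using range_ker_disjoint h⟩,
    fun h => h.1.map (by rw [ker_mkQ]; exact h.2)⟩

theorem disjoint_map_mkQ_iff {p W σ : Submodule R M} (hpW : p ≤ W) (hpσ : Disjoint p σ) :
    Disjoint (W.map p.mkQ) (σ.map p.mkQ) ↔ Disjoint W σ := by
  rw [disjoint_def, disjoint_def]
  constructor
  · intro h x hxW hxσ
    have hx : p.mkQ x = 0 := h _ ⟨x, hxW, rfl⟩ ⟨x, hxσ, rfl⟩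
    exact disjoint_def.1 hpσ x ((Quotient.mk_eq_zero p).1 hx) hxσ
  · rintro h _ ⟨w, hw, rfl⟩ ⟨s, hs, hsw⟩
    have hws : w - s ∈ p := (Submodule.Quotient.eq p).1 hsw.symm
    rw [← hsw, h s (by simpa using W.sub_mem hw (hpW hws)) hs, map_zero]

theorem finrank_map_mkQ_of_disjoint {p σ : Submodule R M} (h : Disjoint σ p) :
    finrank R (σ.map p.mkQ) = finrank R σ := by
  rw [← LinearMap.range_domRestrict]
  exact LinearMap.finrank_range_of_inj (LinearMap.injective_domRestrict_iff.2 (by rwa [ker_mkQ]))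

end Ring

theorem finrank_map_mkQ_add_finrank {K V : Type*} [DivisionRing K] [AddCommGroup V] [Module K V]
    [FiniteDimensional K V] {p W : Submodule K V} (h : p ≤ W) :
    finrank K (W.map p.mkQ) + finrank K p = finrank K W := by
  have := (p.mkQ.domRestrict W).finrank_range_add_finrank_ker
  rwa [LinearMap.range_domRestrict, LinearMap.ker_domRestrict, ker_mkQ,
    (comapSubtypeEquivOfLe h).finrank_eq] at this

theorem AddMonoidHom.card_subtype_comp_of_surjective {G H : Type*} [AddGroup G] [AddGroup H]
    [Finite G] {f : G →+ H} (hf : Function.Surjective f) (P : H → Prop) :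
    Nat.card {g // P (f g)} = Nat.card {h // P h} * Nat.card f.ker := by
  have : Finite H := Finite.of_surjective f hf
  have : Fintype {h // P h} := Fintype.ofFinite _
  rw [← Nat.card_congr (Equiv.sigmaSubtypeFiberEquivSubtype f fun _ => Iff.rfl), Nat.card_sigma,
    sum_congr rfl fun h _ =>
      Nat.card_congr (f.fiberEquivKerOfSurjective hf h.1 : {g // f g = h.1} ≃ f.ker), sum_const,
    card_univ, smul_eq_mul, ← Nat.card_eq_fintype_card]

theorem sum_boole_eq_natCard {α R : Type*} [Fintype α] [AddCommMonoidWithOne R] (P : α → Prop)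
    [DecidablePred P] : ∑ a, (if P a then (1 : R) else 0) = Nat.card {a // P a} := by
  rw [sum_boole, Nat.card_eq_fintype_card, Fintype.card_subtype]

section FiniteField

variable {F V : Type*} [Field F] [Fintype F] [AddCommGroup V] [Module F V] [Finite V]

theorem card_linearIndependent_eq_prod_range (k : ℕ) :
    Nat.card {s : Fin k → V // LinearIndependent F s} =
      ∏ i ∈ range k, (Fintype.card F ^ finrank F V - Fintype.card F ^ i) := by
  rcases le_or_gt k (finrank F V) with hk | hk
  · rw [card_linearIndependent hk, Fin.prod_univ_eq_prod_range (fun i => _ ^ _ - _ ^ i)]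
  · have : IsEmpty {s : Fin k → V // LinearIndependent F s} :=
      ⟨fun ⟨s, hs⟩ => (hk.trans_le (by simpa using hs.fintype_card_le_finrank)).false⟩
    rw [Nat.card_of_isEmpty, eq_comm]
    exact prod_eq_zero (mem_range.mpr hk) (Nat.sub_self _)

theorem card_subtype_mkQ_comp (σ : Submodule F V) {k : ℕ} (P : (Fin k → V ⧸ σ) → Prop) :
    Nat.card {s : Fin k → V // P (σ.mkQ ∘ s)} =
      Nat.card {t // P t} * Fintype.card F ^ (finrank F σ * k) := by
  let f := (σ.mkQ.compLeft (Fin k)).toAddMonoidHom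
  have hf : Function.Surjective f := fun t =>
    ⟨fun i => (σ.mkQ_surjective (t i)).choose,
      funext fun i => (σ.mkQ_surjective (t i)).choose_spec⟩
  have hker : f.ker ≃ (Fin k → σ) :=
    (Equiv.subtypeEquivRight fun s => by
        simp [f, funext_iff, LinearMap.compLeft, Function.comp_def]).trans
      Equiv.subtypePiEquivPi
  rw [show Nat.card {s : Fin k → V // P (σ.mkQ ∘ s)} = Nat.card {s // P (f s)} from rfl,
    f.card_subtype_comp_of_surjective hf P, Nat.card_congr hker, Nat.card_fun,
    natCard_eq_pow_finrank (K := F) (V := σ), Nat.card_fin, Nat.card_eq_fintype_card (α := F),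
    pow_mul]

theorem card_linearIndependent_mkQ_comp (σ : Submodule F V) (k : ℕ) :
    Nat.card {s : Fin k → V // LinearIndependent F (σ.mkQ ∘ s)} =
      (∏ i ∈ range k, (Fintype.card F ^ finrank F (V ⧸ σ) - Fintype.card F ^ i)) *
        Fintype.card F ^ (finrank F σ * k) :=
  have : Finite (V ⧸ σ) := Finite.of_surjective _ σ.mkQ_surjective
  (card_subtype_mkQ_comp σ fun t : Fin k → V ⧸ σ => LinearIndependent F t).trans
    (by rw [card_linearIndependent_eq_prod_range])

theorem card_disjoint_subspaces_mul (σ : Submodule F V) (k : ℕ) :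
    Nat.card {W : Submodule F V // finrank F W = k ∧ Disjoint W σ} *
        ∏ i ∈ range k, (Fintype.card F ^ k - Fintype.card F ^ i) =
      Nat.card {s : Fin k → V // LinearIndependent F (σ.mkQ ∘ s)} := by
  have : Finite (Submodule F V) := Finite.of_injective _ SetLike.coe_injective
  have : Fintype {W : Submodule F V // finrank F W = k ∧ Disjoint W σ} := Fintype.ofFinite _
  let spanOf (s : {s : Fin k → V // LinearIndependent F (σ.mkQ ∘ s)}) :
      {W : Submodule F V // finrank F W = k ∧ Disjoint W σ} :=
    have hs := (linearIndependent_mkQ_comp_iff σ s.1).1 s.2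
    ⟨span F (Set.range s.1), by rw [finrank_span_eq_card hs.1, Fintype.card_fin], hs.2⟩
  have fiber (W : {W : Submodule F V // finrank F W = k ∧ Disjoint W σ}) :
      {s // spanOf s = W} ≃ {t : Fin k → W.1 // LinearIndependent F t} :=
    { toFun := fun s => ⟨fun i => ⟨s.1.1 i, (congrArg Subtype.val s.2).le (subset_span ⟨i, rfl⟩)⟩,
        .of_comp W.1.subtype ((linearIndependent_mkQ_comp_iff σ _).1 s.1.2).1⟩
      invFun := fun t =>
        have hle : span F (Set.range (W.1.subtype ∘ t.1)) ≤ W.1 :=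
          span_le.2 (Set.range_subset_iff.2 fun i => (t.1 i).2)
        have ht := t.2.map' W.1.subtype (ker_subtype _)
        ⟨⟨W.1.subtype ∘ t.1, (linearIndependent_mkQ_comp_iff σ _).2 ⟨ht, W.2.2.mono_left hle⟩⟩,
          Subtype.ext <| eq_of_le_of_finrank_eq hle <| by
            rw [finrank_span_eq_card ht, Fintype.card_fin, W.2.1]⟩
      left_inv := fun _ => rfl
      right_inv := fun _ => rfl }
  rw [← Nat.card_congr (Equiv.sigmaFiberEquiv spanOf), Nat.card_sigma,
    sum_congr rfl fun W _ => (Nat.card_congr (fiber W)).trans <|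
      (card_linearIndependent_eq_prod_range k).trans (by rw [W.2.1]),
    sum_const, card_univ, smul_eq_mul, Nat.card_eq_fintype_card]

theorem card_disjoint_subspaces (σ : Submodule F V) (k : ℕ) :
    Nat.card {W : Submodule F V // finrank F W = k ∧ Disjoint W σ} =
      Fintype.card F ^ (finrank F σ * k) * gbinom (Fintype.card F) (finrank F (V ⧸ σ)) k := by
  have hq : 1 < Fintype.card F := Fintype.one_lt_card
  refine Nat.eq_of_mul_eq_mul_right (m := ∏ i ∈ range k, (Fintype.card F ^ k - Fintype.card F ^ i))
    (prod_pos fun i hi => Nat.sub_pos_of_lt (Nat.pow_lt_pow_right hq (mem_range.mp hi))) ?_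
  rw [card_disjoint_subspaces_mul, card_linearIndependent_mkQ_comp, mul_assoc,
    gbinom_mul_prod_pow_sub_pow (by omega), mul_comm]

theorem card_subspaces_through_disjoint {p σ : Submodule F V} (hpσ : Disjoint p σ) (k : ℕ) :
    Nat.card {W : Submodule F V // finrank F W = finrank F p + k ∧ p ≤ W ∧ Disjoint W σ} =
      Fintype.card F ^ (finrank F σ * k) *
        gbinom (Fintype.card F) (finrank F V - finrank F p - finrank F σ) k := by
  have : Finite (V ⧸ p) := Finite.of_surjective _ p.mkQ_surjective
  have hle (W' : Submodule F (V ⧸ p)) : p ≤ W'.comap p.mkQ :=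
    (ker_mkQ p).ge.trans (LinearMap.ker_le_comap _)
  have hmap (W' : Submodule F (V ⧸ p)) : (W'.comap p.mkQ).map p.mkQ = W' :=
    map_comap_eq_of_surjective p.mkQ_surjective W'
  let e : {W : Submodule F V // finrank F W = finrank F p + k ∧ p ≤ W ∧ Disjoint W σ} ≃
      {W' : Submodule F (V ⧸ p) // finrank F W' = k ∧ Disjoint W' (σ.map p.mkQ)} :=
    { toFun := fun W => ⟨W.1.map p.mkQ,
        by have := finrank_map_mkQ_add_finrank W.2.2.1; omega,
        (disjoint_map_mkQ_iff W.2.2.1 hpσ).2 W.2.2.2⟩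
      invFun := fun W' => ⟨W'.1.comap p.mkQ,
        by have := finrank_map_mkQ_add_finrank (hle W'.1); rw [hmap] at this; omega,
        hle W'.1, (disjoint_map_mkQ_iff (hle W'.1) hpσ).1 (by rw [hmap]; exact W'.2.2)⟩
      left_inv := fun W => Subtype.ext (by simp [comap_map_mkQ, W.2.2.1])
      right_inv := fun W' => Subtype.ext (hmap W'.1) }
  rw [Nat.card_congr e, card_disjoint_subspaces, finrank_quotient, finrank_quotient,
    finrank_map_mkQ_of_disjoint hpσ.symm]

theorem card_subspaces_through_point_disjoint {p : Submodule F V} (hp : finrank F p = 1)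
    (σ : Submodule F V) (k : ℕ) :
    Nat.card {W : {W : Submodule F V // finrank F W = k + 1} // p ≤ W.1 ∧ Disjoint W.1 σ} =
      if p ≤ σ then 0 else Fintype.card F ^ (finrank F σ * k) *
        gbinom (Fintype.card F) (finrank F V - 1 - finrank F σ) k := by
  have hp' : IsAtom p := isAtom_iff_finrank_eq_one.2 hp
  split_ifs with hpσ
  · have : IsEmpty {W : {W : Submodule F V // finrank F W = k + 1} // p ≤ W.1 ∧ Disjoint W.1 σ} :=
      ⟨fun W => hp'.1 (disjoint_self.1 (W.2.2.mono W.2.1 hpσ))⟩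
    exact Nat.card_of_isEmpty
  · have := card_subspaces_through_disjoint (hp'.not_le_iff_disjoint.1 hpσ) k
    rw [hp, add_comm 1 k] at this
    rw [← this]
    exact Nat.card_congr (Equiv.subtypeSubtypeEquivSubtypeInter
      (fun W : Submodule F V => finrank F W = k + 1) fun W => p ≤ W ∧ Disjoint W σ)

end FiniteField

/-- The vector $\chi_{\mathcal Z} - q^{k^2+k}\binom{n-k-1}{k}_q(\binom{n}{k}_q^{-1} j - \chi_\pi)$
lies in the kernel of the point–$k$-space incidence matrix $A$, where $\mathcal Z$ is the
set of $k$-subspaces disjoint from a fixed $k$-subspace $\pi$. -/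
theorem stmt5 (q n k : ℕ) (F : Type) [Field F] [Fintype F]
    (hq : Fintype.card F = q)
    [Fintype {W : Submodule F (Fin (n+1) → F) // Module.finrank F W = k + 1}]
    (π : {W : Submodule F (Fin (n+1) → F) // Module.finrank F W = k + 1}) :
    ∀ p : {P : Submodule F (Fin (n+1) → F) // Module.finrank F P = 1},
      ∑ W : {W : Submodule F (Fin (n+1) → F) // Module.finrank F W = k + 1},
        (if p.1 ≤ W.1 then
          ((if W.1 ⊓ π.1 = ⊥ then (1 : ℝ) else 0)
            - (q : ℝ)^(k^2 + k) * (gbinom q (n - k - 1) k : ℝ) *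
              ((gbinom q n k : ℝ)⁻¹ - (if W = π then (1 : ℝ) else 0)))
        else 0) = 0 := by
  intro p
  have hV : finrank F (Fin (n + 1) → F) = n + 1 := by simp
  have hkn : k ≤ n := by have := π.1.finrank_le; omega
  have hg : (gbinom q n k : ℝ) ≠ 0 :=
    Nat.cast_ne_zero.2 (gbinom_pos (hq ▸ Fintype.card_pos) hkn).ne'
  set c : ℝ := (q : ℝ) ^ (k ^ 2 + k) * gbinom q (n - k - 1) k
  have hp : p.1 ≠ ⊥ := (isAtom_iff_finrank_eq_one.2 p.2).1
  have through := card_subspaces_through_point_disjoint p.2 ⊥ k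
  simp only [disjoint_bot_right, and_true, le_bot_iff, hp, if_false, finrank_bot, hV, hq,
    zero_mul, pow_zero, one_mul, Nat.add_sub_cancel, Nat.sub_zero] at through
  have through_disjoint := card_subspaces_through_point_disjoint p.2 π.1 k
  rw [π.2, hV, hq, Nat.add_sub_cancel, ← Nat.sub_sub, show (k + 1) * k = k ^ 2 + k by ring]
    at through_disjoint
  have summand_eq (W : {W : Submodule F (Fin (n + 1) → F) // finrank F W = k + 1}) :
      (if p.1 ≤ W.1 then ((if W.1 ⊓ π.1 = ⊥ then 1 else 0) - c * ((gbinom q n k : ℝ)⁻¹ -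
        if W = π then 1 else 0)) else 0) =
      (if p.1 ≤ W.1 ∧ Disjoint W.1 π.1 then 1 else 0) -
        c * (gbinom q n k : ℝ)⁻¹ * (if p.1 ≤ W.1 then 1 else 0) +
        c * (if W = π then (if p.1 ≤ π.1 then 1 else 0) else 0) := by
    rcases eq_or_ne W π with rfl | hWπ <;> by_cases hpW : p.1 ≤ W.1 <;> simp [disjoint_iff, *]
    all_goals ring
  rw [sum_congr rfl fun W _ => summand_eq W, sum_add_distrib, sum_sub_distrib, ← mul_sum, ← mul_sum,
    sum_ite_eq', if_pos (mem_univ π), sum_boole_eq_natCard, sum_boole_eq_natCard,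
    through_disjoint, through]
  split_ifs <;> push_cast <;> field_simp <;> ring
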